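/- Let μ lie in the upper half-plane, let λ_k ≠ λ_l be complex numbers with d := (λ_k − λ_l)/2 satisfying ϑ1(d|μ) ≠ 0, let G ∈ GL_2(ℂ), and let J_1, J_2, J_3 ∈ ℂ satisfy Σ_{α=1}^3 J_α w_α(d) σ_α = −(1/2) G σ3 G⁻¹. Define f(λ) := (1/2)I + Σ_{α=1}^3 J_α w_α(λ − (λ_k+λ_l)/2) σ_α. Then f(λ_k) = G P₋ G⁻¹ and f(λ_l) = G P₊ G⁻¹; in particular f(λ_k) annihilates the first column of G and f(λ_l) annihilates the second column of G, and f(λ_k), f(λ_l) are complementary rank-one projectors. -/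
import Mathlib


open Complex

/-- Theta function with characteristic `[p,q]`:
`ϑ[p,q](λ|μ) = Σ_{m∈ℤ} exp(πiμ(m+p)² + 2πi(m+p)(λ+q))`. -/
noncomputable def theta (p q μ z : ℂ) : ℂ :=
  ∑' m : ℤ, Complex.exp ((Real.pi : ℂ) * I * μ * ((m : ℂ) + p) ^ 2 +
    2 * (Real.pi : ℂ) * I * ((m : ℂ) + p) * (z + q))

/-- `ϑ1(λ) = −ϑ[1/2,1/2](λ|μ)`. -/
noncomputable def th1 (μ z : ℂ) : ℂ := -theta (1 / 2) (1 / 2) μ z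

/-- `ϑ2(λ) = ϑ[1/2,0](λ|μ)`. -/
noncomputable def th2 (μ z : ℂ) : ℂ := theta (1 / 2) 0 μ z

/-- `ϑ3(λ) = ϑ[0,0](λ|μ)`. -/
noncomputable def th3 (μ z : ℂ) : ℂ := theta 0 0 μ z

/-- `ϑ4(λ) = ϑ[0,1/2](λ|μ)`. -/
noncomputable def th4 (μ z : ℂ) : ℂ := theta 0 (1 / 2) μ z

/-- `w1(λ) = π ϑ2 ϑ3 ϑ4(λ)/ϑ1(λ)`. -/
noncomputable def w1 (μ z : ℂ) : ℂ := (Real.pi : ℂ) * th2 μ 0 * th3 μ 0 * th4 μ z / th1 μ z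

/-- `w2(λ) = π ϑ2 ϑ4 ϑ3(λ)/ϑ1(λ)`. -/
noncomputable def w2 (μ z : ℂ) : ℂ := (Real.pi : ℂ) * th2 μ 0 * th4 μ 0 * th3 μ z / th1 μ z

/-- `w3(λ) = π ϑ3 ϑ4 ϑ2(λ)/ϑ1(λ)`. -/
noncomputable def w3 (μ z : ℂ) : ℂ := (Real.pi : ℂ) * th3 μ 0 * th4 μ 0 * th2 μ z / th1 μ z


/-- The Pauli matrices `σ1, σ2, σ3`. -/
noncomputable def pauli : Fin 3 → Matrix (Fin 2) (Fin 2) ℂ :=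
  ![!![0, 1; 1, 0], !![0, I; -I, 0], !![1, 0; 0, -1]]

/-- The triple of functions `(w1, w2, w3)`. -/
noncomputable def wfun (μ : ℂ) : Fin 3 → ℂ → ℂ := ![w1 μ, w2 μ, w3 μ]

/-- The projection matrix `P₊ = [[1,0],[0,0]]`. -/
def Pplus : Matrix (Fin 2) (Fin 2) ℂ := !![1, 0; 0, 0]

/-- The projection matrix `P₋ = [[0,0],[0,1]]`. -/
def Pminus : Matrix (Fin 2) (Fin 2) ℂ := !![0, 0; 0, 1]

lemma exp_shift (m : ℤ) : Complex.exp (2 * (Real.pi : ℂ) * I * m) = 1 := by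
  have h := Complex.exp_int_mul_two_pi_mul_I m
  rw [← h]; ring_nf

lemma exp_shift' (m : ℤ) :
    Complex.exp (2 * (Real.pi : ℂ) * I * m + (Real.pi : ℂ) * I) = -1 := by
  rw [Complex.exp_add, exp_shift, one_mul, Complex.exp_pi_mul_I]

lemma theta00_even (μ z : ℂ) : theta 0 0 μ (-z) = theta 0 0 μ z := by
  unfold theta
  have key := (Equiv.neg ℤ).tsum_eq (fun k : ℤ => Complex.exp
    ((Real.pi : ℂ) * I * μ * ((k : ℂ) + 0) ^ 2 +
      2 * (Real.pi : ℂ) * I * ((k : ℂ) + 0) * (z + 0)))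
  rw [← key]
  refine tsum_congr fun m => ?_
  congr 1
  simp only [Equiv.neg_apply, Int.cast_neg]
  ring

lemma theta0h_even (μ z : ℂ) : theta 0 (1/2) μ (-z) = theta 0 (1/2) μ z := by
  unfold theta
  have key := (Equiv.neg ℤ).tsum_eq (fun k : ℤ => Complex.exp
    ((Real.pi : ℂ) * I * μ * ((k : ℂ) + 0) ^ 2 +
      2 * (Real.pi : ℂ) * I * ((k : ℂ) + 0) * (z + 1/2)))
  rw [← key]
  refine tsum_congr fun m => ?_
  simp only [Equiv.neg_apply, Int.cast_neg]
  have harg : (Real.pi : ℂ) * I * μ * ((m : ℂ) + 0) ^ 2 +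
      2 * (Real.pi : ℂ) * I * ((m : ℂ) + 0) * (-z + 1/2)
      = ((Real.pi : ℂ) * I * μ * (-(m : ℂ) + 0) ^ 2 +
        2 * (Real.pi : ℂ) * I * (-(m : ℂ) + 0) * (z + 1/2))
        + 2 * (Real.pi : ℂ) * I * m := by ring
  rw [harg, Complex.exp_add, exp_shift, mul_one]

lemma thetah0_even (μ z : ℂ) : theta (1/2) 0 μ (-z) = theta (1/2) 0 μ z := by
  unfold theta
  have key := (Equiv.subLeft (-1 : ℤ)).tsum_eq (fun k : ℤ => Complex.exp
    ((Real.pi : ℂ) * I * μ * ((k : ℂ) + 1/2) ^ 2 +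
      2 * (Real.pi : ℂ) * I * ((k : ℂ) + 1/2) * (z + 0)))
  rw [← key]
  refine tsum_congr fun m => ?_
  congr 1
  simp only [Equiv.subLeft_apply, Int.cast_sub, Int.cast_neg, Int.cast_one]
  ring

lemma thetahh_odd (μ z : ℂ) : theta (1/2) (1/2) μ (-z) = -theta (1/2) (1/2) μ z := by
  unfold theta
  have key := (Equiv.subLeft (-1 : ℤ)).tsum_eq (fun k : ℤ => Complex.exp
    ((Real.pi : ℂ) * I * μ * ((k : ℂ) + 1/2) ^ 2 +
      2 * (Real.pi : ℂ) * I * ((k : ℂ) + 1/2) * (z + 1/2)))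
  rw [← key, ← tsum_neg]
  refine tsum_congr fun m => ?_
  simp only [Equiv.subLeft_apply, Int.cast_sub, Int.cast_neg, Int.cast_one]
  have harg : (Real.pi : ℂ) * I * μ * ((m : ℂ) + 1/2) ^ 2 +
      2 * (Real.pi : ℂ) * I * ((m : ℂ) + 1/2) * (-z + 1/2)
      = ((Real.pi : ℂ) * I * μ * ((-1 - (m : ℂ)) + 1/2) ^ 2 +
        2 * (Real.pi : ℂ) * I * ((-1 - (m : ℂ)) + 1/2) * (z + 1/2))
        + (2 * (Real.pi : ℂ) * I * m + (Real.pi : ℂ) * I) := by ring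
  rw [harg, Complex.exp_add, exp_shift', mul_neg_one]

lemma th1_odd (μ z : ℂ) : th1 μ (-z) = -th1 μ z := by
  unfold th1; rw [thetahh_odd]
lemma w1_odd (μ z : ℂ) : w1 μ (-z) = -w1 μ z := by
  unfold w1 th4 th1
  rw [theta0h_even, thetahh_odd, neg_neg, div_neg]
  ring
lemma w2_odd (μ z : ℂ) : w2 μ (-z) = -w2 μ z := by
  unfold w2 th3 th1
  rw [theta00_even, thetahh_odd, neg_neg, div_neg]
  ring
lemma w3_odd (μ z : ℂ) : w3 μ (-z) = -w3 μ z := by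
  unfold w3 th2 th1
  rw [thetah0_even, thetahh_odd, neg_neg, div_neg]
  ring

lemma wfun_odd (μ z : ℂ) (α : Fin 3) : wfun μ α (-z) = -wfun μ α z := by
  fin_cases α
  · exact w1_odd μ z
  · exact w2_odd μ z
  · exact w3_odd μ z

lemma Pminus_eq : Pminus = (1/2 : ℂ) • (1 : Matrix (Fin 2) (Fin 2) ℂ) - (1/2 : ℂ) • pauli 2 := by
  ext i j
  fin_cases i <;> fin_cases j <;>
    simp [Pminus, pauli, Matrix.one_apply] <;> norm_num

lemma Pplus_eq : Pplus = (1/2 : ℂ) • (1 : Matrix (Fin 2) (Fin 2) ℂ) + (1/2 : ℂ) • pauli 2 := by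
  ext i j
  fin_cases i <;> fin_cases j <;>
    simp [Pplus, pauli, Matrix.one_apply] <;> norm_num

lemma Pminus_sq : Pminus * Pminus = Pminus := by
  ext i j
  fin_cases i <;> fin_cases j <;>
    simp [Pminus, Matrix.mul_apply, Fin.sum_univ_two]

lemma Pplus_sq : Pplus * Pplus = Pplus := by
  ext i j
  fin_cases i <;> fin_cases j <;>
    simp [Pplus, Matrix.mul_apply, Fin.sum_univ_two]

lemma Psum : Pminus + Pplus = 1 := by
  ext i j
  fin_cases i <;> fin_cases j <;>
    simp [Pminus, Pplus, Matrix.one_apply]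


/-- If `Σ_α J_α w_α(d) σ_α = −(1/2) G σ3 G⁻¹` with `d = (λ_k−λ_l)/2`, then the
unnormalized multiplier `f(λ) = (1/2)I + Σ_α J_α w_α(λ − (λ_k+λ_l)/2) σ_α` of the
elementary elliptic Schlesinger transformation satisfies `f(λ_k) = G P₋ G⁻¹` and
`f(λ_l) = G P₊ G⁻¹`; in particular `f(λ_k)` annihilates the first column of `G`,
`f(λ_l)` annihilates the second column of `G`, and `f(λ_k)`, `f(λ_l)` are complementary
(rank-one) projectors. -/
theorem elliptic_multiplier_projectors (μ : ℂ) (hμ : 0 < μ.im)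
    (lamk laml : ℂ) (hkl : lamk ≠ laml)
    (hd : th1 μ ((lamk - laml) / 2) ≠ 0)
    (G : Matrix (Fin 2) (Fin 2) ℂ) (hG : IsUnit G.det)
    (J : Fin 3 → ℂ)
    (hJ : ∑ α : Fin 3, (J α * wfun μ α ((lamk - laml) / 2)) • pauli α =
      (-(1 / 2) : ℂ) • (G * pauli 2 * G⁻¹))
    (f : ℂ → Matrix (Fin 2) (Fin 2) ℂ)
    (hf : ∀ z : ℂ, f z = (1 / 2 : ℂ) • (1 : Matrix (Fin 2) (Fin 2) ℂ) +
      ∑ α : Fin 3, (J α * wfun μ α (z - (lamk + laml) / 2)) • pauli α) :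
    f lamk = G * Pminus * G⁻¹ ∧
    f laml = G * Pplus * G⁻¹ ∧
    (f lamk).mulVec (fun i => G i 0) = 0 ∧
    (f laml).mulVec (fun i => G i 1) = 0 ∧
    f lamk * f lamk = f lamk ∧
    f laml * f laml = f laml ∧
    f lamk + f laml = 1 := by
  have hGi : G * G⁻¹ = 1 := Matrix.mul_nonsing_inv G hG
  have hiG : G⁻¹ * G = 1 := Matrix.nonsing_inv_mul G hG
  set d : ℂ := (lamk - laml) / 2 with hdd
  set T : Matrix (Fin 2) (Fin 2) ℂ := G * pauli 2 * G⁻¹ with hT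
  set S : Matrix (Fin 2) (Fin 2) ℂ := ∑ α : Fin 3, (J α * wfun μ α d) • pauli α with hS
  have hdk : lamk - (lamk + laml) / 2 = d := by rw [hdd]; ring
  have hdl : laml - (lamk + laml) / 2 = -d := by rw [hdd]; ring
  have hfk : f lamk = (1/2 : ℂ) • 1 + S := by rw [hf, hdk]
  have hfl : f laml = (1/2 : ℂ) • 1 - S := by
    rw [hf, hdl]
    have : ∑ α : Fin 3, (J α * wfun μ α (-d)) • pauli α = -S := by
      rw [hS, ← Finset.sum_neg_distrib]
      refine Finset.sum_congr rfl fun α _ => ?_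
      rw [wfun_odd, mul_neg, neg_smul]
    rw [this, sub_eq_add_neg]
  have hST : S = (-(1/2) : ℂ) • T := hJ
  have hfk' : f lamk = G * Pminus * G⁻¹ := by
    rw [hfk, hST, Pminus_eq]
    simp only [Matrix.mul_sub, Matrix.sub_mul, Matrix.mul_smul, Matrix.smul_mul,
      Matrix.mul_one, hGi, ← hT, neg_smul]
    abel
  have hfl' : f laml = G * Pplus * G⁻¹ := by
    rw [hfl, hST, Pplus_eq]
    simp only [Matrix.mul_add, Matrix.add_mul, Matrix.mul_smul, Matrix.smul_mul,
      Matrix.mul_one, hGi, ← hT, neg_smul]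
    abel
  refine ⟨hfk', hfl', ?_, ?_, ?_, ?_, ?_⟩
  · have hcol : (fun i => G i 0) = G.mulVec (Pi.single 0 1) := by
      funext i
      simp [Matrix.mulVec, dotProduct, Fin.sum_univ_two, Pi.single_apply]
    rw [hfk', hcol, Matrix.mulVec_mulVec]
    have : G * Pminus * G⁻¹ * G = G * Pminus := by
      rw [Matrix.mul_assoc (G * Pminus), hiG, Matrix.mul_one]
    rw [this, ← Matrix.mulVec_mulVec]
    have : Pminus.mulVec (Pi.single 0 1) = 0 := by
      funext i
      fin_cases i <;> simp [Pminus, Matrix.mulVec, dotProduct, Fin.sum_univ_two, Pi.single_apply]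
    rw [this, Matrix.mulVec_zero]
  · have hcol : (fun i => G i 1) = G.mulVec (Pi.single 1 1) := by
      funext i
      simp [Matrix.mulVec, dotProduct, Fin.sum_univ_two, Pi.single_apply]
    rw [hfl', hcol, Matrix.mulVec_mulVec]
    have : G * Pplus * G⁻¹ * G = G * Pplus := by
      rw [Matrix.mul_assoc (G * Pplus), hiG, Matrix.mul_one]
    rw [this, ← Matrix.mulVec_mulVec]
    have : Pplus.mulVec (Pi.single 1 1) = 0 := by
      funext i
      fin_cases i <;> simp [Pplus, Matrix.mulVec, dotProduct, Fin.sum_univ_two, Pi.single_apply]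
    rw [this, Matrix.mulVec_zero]
  · rw [hfk']
    calc G * Pminus * G⁻¹ * (G * Pminus * G⁻¹)
        = G * Pminus * (G⁻¹ * G) * Pminus * G⁻¹ := by
          simp only [Matrix.mul_assoc]
      _ = G * Pminus * G⁻¹ := by rw [hiG, Matrix.mul_one, Matrix.mul_assoc G, Pminus_sq]
  · rw [hfl']
    calc G * Pplus * G⁻¹ * (G * Pplus * G⁻¹)
        = G * Pplus * (G⁻¹ * G) * Pplus * G⁻¹ := by
          simp only [Matrix.mul_assoc]
      _ = G * Pplus * G⁻¹ := by rw [hiG, Matrix.mul_one, Matrix.mul_assoc G, Pplus_sq]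
  · rw [hfk', hfl', ← Matrix.add_mul, ← Matrix.mul_add, Psum, Matrix.mul_one, hGi]
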